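/- The classical value of the magic square (MS) game is 8/9: for every classical deterministic strategy (A, B) one has MSwins(A,B) ≤ 16, and there exists a strategy with MSwins(A,B) = 16 (so the maximal classical winning probability is 16/18 = 8/9). -/
import Mathlib


/-- The variable index set of each of the 6 magic square equations
(3 rows followed by 3 columns). -/
def vars : Fin 6 → Finset (Fin 9)
  | 0 => {0, 1, 2}
  | 1 => {3, 4, 5}
  | 2 => {6, 7, 8}
  | 3 => {0, 3, 6}
  | 4 => {1, 4, 7}
  | 5 => {2, 5, 8}

/-- The parity of each magic square equation: 0 for rows, 1 for columns. -/
def par : Fin 6 → ZMod 2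
  | 0 => 0
  | 1 => 0
  | 2 => 0
  | 3 => 1
  | 4 => 1
  | 5 => 1

/-- The 18 ordered row–column pairs of distinct magic square equations
sharing exactly one variable. -/
def MSPairs : Finset (Fin 6 × Fin 6) :=
  Finset.univ.filter fun p => p.1 ≠ p.2 ∧ (vars p.1 ∩ vars p.2).card = 1

/-- The number of pairs in `MSPairs` on which the classical deterministic
strategy `(A, B)` wins. -/
def MSwins (A B : Fin 6 → Fin 9 → ZMod 2) : ℕ :=
  (MSPairs.filter fun p =>
    (∑ m ∈ vars p.1, A p.1 m) = par p.1 ∧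
    (∑ m ∈ vars p.2, B p.2 m) = par p.2 ∧
    ∀ m ∈ vars p.1 ∩ vars p.2, A p.1 m = B p.2 m).card

/-- Core parity contradiction: a full 3×3 grid cannot have all rows even
and all columns odd. -/
lemma ms_key (x0 x1 x2 x3 x4 x5 x6 x7 x8 y0 y1 y2 y3 y4 y5 y6 y7 y8 : ZMod 2)
    (a0 : x0 + (x1 + x2) = 0) (a1 : x3 + (x4 + x5) = 0) (a2 : x6 + (x7 + x8) = 0)
    (b0 : y0 + (y3 + y6) = 1) (b1 : y1 + (y4 + y7) = 1) (b2 : y2 + (y5 + y8) = 1)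
    (e0 : x0 = y0) (e1 : x1 = y1) (e2 : x2 = y2) (e3 : x3 = y3) (e4 : x4 = y4)
    (e5 : x5 = y5) (e6 : x6 = y6) (e7 : x7 = y7) (e8 : x8 = y8) : False := by
  have : (0 : ZMod 2) = 1 := by
    linear_combination (norm := (ring_nf; simp [CharTwo.two_eq_zero]))
      a0 + a1 + a2 + b0 + b1 + b2 + e0 + e1 + e2 + e3 + e4 + e5 + e6 + e7 + e8
  exact absurd this (by decide)

lemma ms_expand3 (f : Fin 9 → ZMod 2) (a b c : Fin 9)
    (h1 : a ∉ ({b, c} : Finset (Fin 9))) (h2 : b ∉ ({c} : Finset (Fin 9))) :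
    ∑ m ∈ ({a, b, c} : Finset (Fin 9)), f m = f a + (f b + f c) := by
  rw [Finset.sum_insert h1, Finset.sum_insert h2, Finset.sum_singleton]

/-- The 9 (row, column) pairs. -/
def msRC : Finset (Fin 6 × Fin 6) :=
  {(0,3),(0,4),(0,5),(1,3),(1,4),(1,5),(2,3),(2,4),(2,5)}

/-- The 9 (column, row) pairs. -/
def msCR : Finset (Fin 6 × Fin 6) :=
  {(3,0),(4,0),(5,0),(3,1),(4,1),(5,1),(3,2),(4,2),(5,2)}

lemma ms_not_all_RC (A B : Fin 6 → Fin 9 → ZMod 2)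
    (h : ∀ p ∈ msRC, (∑ m ∈ vars p.1, A p.1 m) = par p.1 ∧
      (∑ m ∈ vars p.2, B p.2 m) = par p.2 ∧
      ∀ m ∈ vars p.1 ∩ vars p.2, A p.1 m = B p.2 m) : False := by
  obtain ⟨a0, b3, c03⟩ := h (0,3) (by decide)
  obtain ⟨a1, b4, c14⟩ := h (1,4) (by decide)
  obtain ⟨a2, b5, c25⟩ := h (2,5) (by decide)
  have c04 := (h (0,4) (by decide)).2.2
  have c05 := (h (0,5) (by decide)).2.2
  have c13 := (h (1,3) (by decide)).2.2
  have c15 := (h (1,5) (by decide)).2.2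
  have c23 := (h (2,3) (by decide)).2.2
  have c24 := (h (2,4) (by decide)).2.2
  refine ms_key (A 0 0) (A 0 1) (A 0 2) (A 1 3) (A 1 4) (A 1 5) (A 2 6) (A 2 7) (A 2 8)
    (B 3 0) (B 4 1) (B 5 2) (B 3 3) (B 4 4) (B 5 5) (B 3 6) (B 4 7) (B 5 8)
    ?_ ?_ ?_ ?_ ?_ ?_
    (c03 0 (by decide)) (c04 1 (by decide)) (c05 2 (by decide))
    (c13 3 (by decide)) (c14 4 (by decide)) (c15 5 (by decide))
    (c23 6 (by decide)) (c24 7 (by decide)) (c25 8 (by decide))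
  · rw [← ms_expand3 (A 0) 0 1 2 (by decide) (by decide)]; exact a0
  · rw [← ms_expand3 (A 1) 3 4 5 (by decide) (by decide)]; exact a1
  · rw [← ms_expand3 (A 2) 6 7 8 (by decide) (by decide)]; exact a2
  · rw [← ms_expand3 (B 3) 0 3 6 (by decide) (by decide)]; exact b3
  · rw [← ms_expand3 (B 4) 1 4 7 (by decide) (by decide)]; exact b4
  · rw [← ms_expand3 (B 5) 2 5 8 (by decide) (by decide)]; exact b5

lemma ms_not_all_CR (A B : Fin 6 → Fin 9 → ZMod 2)
    (h : ∀ p ∈ msCR, (∑ m ∈ vars p.1, A p.1 m) = par p.1 ∧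
      (∑ m ∈ vars p.2, B p.2 m) = par p.2 ∧
      ∀ m ∈ vars p.1 ∩ vars p.2, A p.1 m = B p.2 m) : False := by
  obtain ⟨a3, b0, c30⟩ := h (3,0) (by decide)
  obtain ⟨a4, b1, c41⟩ := h (4,1) (by decide)
  obtain ⟨a5, b2, c52⟩ := h (5,2) (by decide)
  have c40 := (h (4,0) (by decide)).2.2
  have c50 := (h (5,0) (by decide)).2.2
  have c31 := (h (3,1) (by decide)).2.2
  have c51 := (h (5,1) (by decide)).2.2
  have c32 := (h (3,2) (by decide)).2.2
  have c42 := (h (4,2) (by decide)).2.2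
  refine ms_key (B 0 0) (B 0 1) (B 0 2) (B 1 3) (B 1 4) (B 1 5) (B 2 6) (B 2 7) (B 2 8)
    (A 3 0) (A 4 1) (A 5 2) (A 3 3) (A 4 4) (A 5 5) (A 3 6) (A 4 7) (A 5 8)
    ?_ ?_ ?_ ?_ ?_ ?_
    ((c30 0 (by decide)).symm) ((c40 1 (by decide)).symm) ((c50 2 (by decide)).symm)
    ((c31 3 (by decide)).symm) ((c41 4 (by decide)).symm) ((c51 5 (by decide)).symm)
    ((c32 6 (by decide)).symm) ((c42 7 (by decide)).symm) ((c52 8 (by decide)).symm)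
  · rw [← ms_expand3 (B 0) 0 1 2 (by decide) (by decide)]; exact b0
  · rw [← ms_expand3 (B 1) 3 4 5 (by decide) (by decide)]; exact b1
  · rw [← ms_expand3 (B 2) 6 7 8 (by decide) (by decide)]; exact b2
  · rw [← ms_expand3 (A 3) 0 3 6 (by decide) (by decide)]; exact a3
  · rw [← ms_expand3 (A 4) 1 4 7 (by decide) (by decide)]; exact a4
  · rw [← ms_expand3 (A 5) 2 5 8 (by decide) (by decide)]; exact a5

/-- An optimal classical strategy. -/
def msA : Fin 6 → Fin 9 → ZMod 2 :=
  fun j => if j = 5 then ![1,1,1,0,0,0,0,0,0] else ![1,1,0,0,0,0,0,0,0]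

theorem ms_classical_value :
    (∀ A B : Fin 6 → Fin 9 → ZMod 2, MSwins A B ≤ 16) ∧
    (∃ A B : Fin 6 → Fin 9 → ZMod 2, MSwins A B = 16) := by
  constructor
  · intro A B
    unfold MSwins
    have hsplit : MSPairs = msRC ∪ msCR := by decide
    rw [hsplit, Finset.filter_union,
      Finset.card_union_of_disjoint (Finset.disjoint_filter_filter (by decide))]
    have h1 : (msRC.filter fun p =>
        (∑ m ∈ vars p.1, A p.1 m) = par p.1 ∧
        (∑ m ∈ vars p.2, B p.2 m) = par p.2 ∧
        ∀ m ∈ vars p.1 ∩ vars p.2, A p.1 m = B p.2 m).card < 9 := by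
      have : ∃ p ∈ msRC, ¬ ((∑ m ∈ vars p.1, A p.1 m) = par p.1 ∧
          (∑ m ∈ vars p.2, B p.2 m) = par p.2 ∧
          ∀ m ∈ vars p.1 ∩ vars p.2, A p.1 m = B p.2 m) := by
        by_contra hc
        push_neg at hc
        exact ms_not_all_RC A B hc
      calc _ < msRC.card := Finset.card_lt_card (Finset.filter_ssubset.mpr this)
        _ = 9 := by decide
    have h2 : (msCR.filter fun p =>
        (∑ m ∈ vars p.1, A p.1 m) = par p.1 ∧
        (∑ m ∈ vars p.2, B p.2 m) = par p.2 ∧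
        ∀ m ∈ vars p.1 ∩ vars p.2, A p.1 m = B p.2 m).card < 9 := by
      have : ∃ p ∈ msCR, ¬ ((∑ m ∈ vars p.1, A p.1 m) = par p.1 ∧
          (∑ m ∈ vars p.2, B p.2 m) = par p.2 ∧
          ∀ m ∈ vars p.1 ∩ vars p.2, A p.1 m = B p.2 m) := by
        by_contra hc
        push_neg at hc
        exact ms_not_all_CR A B hc
      calc _ < msCR.card := Finset.card_lt_card (Finset.filter_ssubset.mpr this)
        _ = 9 := by decide
    omega
  · exact ⟨msA, msA, by decide⟩
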